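/- arXiv:1603.02154 — 5 statements merged into one kernel-verified Lean document; each statement's English description precedes it below -/
import Mathlib

section
/- Let b, n be integers with n ≥ 1 and let k ≥ 1. The number of k-tuples (x_1,...,x_k) ∈ (Z/nZ)^k with x_1 + ... + x_k ≡ b (mod n) and gcd(x_i, n) = 1 for all i equals (φ(n)^k / n) · Π_{p | n, p | b} (1 - (-1)^{k-1}/(p-1)^{k-1}) · Π_{p | n, p ∤ b} (1 - (-1)^k/(p-1)^k). -/
/-!
By the Chinese remainder theorem the number of `k`-tuples of units of `ℤ/n` with sum `b` is
multiplicative in `n`. For `n = p ^ a`, being a unit depends only on the residue mod `p`, and once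
the first `k - 1` coordinates are chosen the last one is determined by the sum; hence every
admissible tuple mod `p` lifts to exactly `p ^ ((a - 1) (k - 1))` admissible tuples mod `p ^ a`.
Mod `p` the units are the nonzero residues, and the number `N k b` of `k`-tuples of nonzero
residues with sum `b` satisfies `N (k + 1) b + N k b = (p - 1) ^ k`, which solves to
`p * N k b = (p - 1) ^ k + (-1) ^ k * (p * [b = 0] - 1)`.
-/

open Finset

theorem card_subtype_and_add_card_subtype_and_not {α : Type*} [Finite α] (P Q : α → Prop) :
    Nat.card {x // P x ∧ Q x} + Nat.card {x // P x ∧ ¬Q x} = Nat.card {x // P x} := by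
  classical
  rw [← Nat.card_congr (Equiv.subtypeSubtypeEquivSubtypeInter P Q),
    ← Nat.card_congr (Equiv.subtypeSubtypeEquivSubtypeInter P (fun x => ¬Q x)), ← Nat.card_sum]
  exact Nat.card_congr (Equiv.sumCompl _)

theorem card_tuples_forall_mem {α : Type*} (S : Set α) (k : ℕ) :
    Nat.card {x : Fin k → α // ∀ i, x i ∈ S} = Nat.card S ^ k := by
  rw [Nat.card_congr Equiv.subtypePiEquivPi, Nat.card_pi]
  simp

theorem AddMonoidHom.card_preimage_mul_card {G H : Type*} [AddGroup G] [AddGroup H] (f : G →+ H)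
    (hf : Function.Surjective f) (T : Set H) :
    Nat.card (f ⁻¹' T) * Nat.card H = Nat.card G * Nat.card T := by
  let e := QuotientAddGroup.quotientKerEquivOfSurjective f hf
  have hpreimage : Nat.card (f ⁻¹' T) = Nat.card f.ker * Nat.card T := by
    change Nat.card (QuotientAddGroup.mk ⁻¹' (e ⁻¹' T)) = _
    rw [Nat.card_congr (QuotientAddGroup.preimageMkEquivAddSubgroupProdSet _ _), Nat.card_prod,
      Nat.card_preimage_of_injective e.injective (by simp [e.surjective.range_eq])]
  rw [hpreimage, f.ker.card_eq_card_quotient_mul_card_addSubgroup, Nat.card_congr e.toEquiv]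
  ring

section RestrictedSumCount

variable {M N : Type*} [AddCommGroup M] [AddCommGroup N]

noncomputable def restrictedSumCount (S : Set M) (k : ℕ) (b : M) : ℕ :=
  Nat.card {x : Fin k → M // ∑ i, x i = b ∧ ∀ i, x i ∈ S}

theorem restrictedSumCount_zero [DecidableEq M] (S : Set M) (b : M) :
    restrictedSumCount S 0 b = if b = 0 then 1 else 0 := by
  by_cases hb : b = 0
  · subst hb
    simp [restrictedSumCount]
  · simp [restrictedSumCount, hb, eq_comm]

theorem restrictedSumCount_succ (S : Set M) (k : ℕ) (b : M) :
    restrictedSumCount S (k + 1) b =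
      Nat.card {x : Fin k → M // (∀ i, x i ∈ S) ∧ b - ∑ i, x i ∈ S} :=
  Nat.card_congr
    { toFun x := ⟨Fin.init x.1, fun i => x.2.2 _, by
        simpa [← x.2.1, Fin.sum_univ_castSucc, Fin.init] using x.2.2 (Fin.last k)⟩
      invFun y := ⟨Fin.snoc y.1 (b - ∑ i, y.1 i), by simp [Fin.sum_univ_castSucc], fun i =>
        Fin.lastCases (by rw [Fin.snoc_last]; exact y.2.2) (fun j => by simpa using y.2.1 j) i⟩
      left_inv := by
        rintro ⟨x, rfl, -⟩
        ext i
        refine Fin.lastCases ?_ (fun j => ?_) i <;> simp [Fin.sum_univ_castSucc, Fin.init]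
      right_inv y := by ext1; simp }

theorem restrictedSumCount_preimage_addEquiv (e : M ≃+ N) (S : Set N) (k : ℕ) (b : M) :
    restrictedSumCount (e ⁻¹' S) k b = restrictedSumCount S k (e b) :=
  Nat.card_congr <| ((Equiv.refl _).arrowCongr e.toEquiv).subtypeEquiv fun x => by
    simp [← map_sum, e.injective.eq_iff]

theorem restrictedSumCount_prod (S : Set M) (T : Set N) (k : ℕ) (b : M) (c : N) :
    restrictedSumCount (S ×ˢ T) k (b, c) =
      restrictedSumCount S k b * restrictedSumCount T k c := by
  rw [restrictedSumCount, restrictedSumCount, restrictedSumCount, ← Nat.card_prod]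
  refine Nat.card_congr (((Equiv.arrowProdEquivProdArrow _ _ _).subtypeEquiv fun x => ?_).trans
    Equiv.subtypeProdEquivProd)
  simp [Prod.ext_iff, Prod.fst_sum, Prod.snd_sum, forall_and]
  tauto

/-- Once the last coordinate is eliminated, membership only depends on the image under `π`, so
the count is that of a preimage under the surjection `(Fin k → M) → (Fin k → N)`. -/
theorem restrictedSumCount_preimage_succ (π : M →+ N) (hπ : Function.Surjective π)
    (S : Set N) (k : ℕ) (b : M) :
    restrictedSumCount (π ⁻¹' S) (k + 1) b * Nat.card N ^ k =
      Nat.card M ^ k * restrictedSumCount S (k + 1) (π b) := by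
  let T : Set (Fin k → N) := {y | (∀ i, y i ∈ S) ∧ π b - ∑ i, y i ∈ S}
  have hcard := (π.compLeft (Fin k)).card_preimage_mul_card hπ.comp_left T
  simp only [Nat.card_fun, Nat.card_eq_fintype_card (α := Fin k), Fintype.card_fin] at hcard
  rw [restrictedSumCount_succ, restrictedSumCount_succ]
  convert hcard using 2
  · exact Nat.card_congr (Equiv.subtypeEquivRight fun x => by simp [T, map_sum])
  · rfl

/-- A `k`-tuple of nonzero elements extends to a `(k + 1)`-tuple of nonzero elements with sum `b`
unless it already sums to `b`. -/
theorem restrictedSumCount_compl_zero_succ_add [Finite M] (k : ℕ) (b : M) :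
    restrictedSumCount ({0}ᶜ : Set M) (k + 1) b + restrictedSumCount {0}ᶜ k b =
      (Nat.card M - 1) ^ k := by
  have hcompl : Nat.card ({0}ᶜ : Set M) = Nat.card M - 1 := by
    rw [Nat.card_coe_set_eq, Set.ncard_compl]
    simp
  have hsplit := card_subtype_and_add_card_subtype_and_not
    (fun x : Fin k → M => ∀ i, x i ∈ ({0}ᶜ : Set M)) (fun x => b - ∑ i, x i ∈ ({0}ᶜ : Set M))
  rw [card_tuples_forall_mem, hcompl] at hsplit
  rw [restrictedSumCount_succ, restrictedSumCount, ← hsplit]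
  congr 2
  simp only [Set.mem_compl_singleton_iff, not_not, sub_eq_zero, eq_comm (a := b), and_comm]

theorem cast_card_mul_restrictedSumCount_compl_zero [Finite M] [DecidableEq M] (k : ℕ) (b : M) :
    (Nat.card M : ℚ) * restrictedSumCount ({0}ᶜ : Set M) k b =
      ((Nat.card M : ℚ) - 1) ^ k + (-1) ^ k * ((if b = 0 then (Nat.card M : ℚ) else 0) - 1) := by
  induction k with
  | zero => rw [restrictedSumCount_zero]; split_ifs <;> simp
  | succ k ih =>
    have hrec := congrArg (Nat.cast : ℕ → ℚ) (restrictedSumCount_compl_zero_succ_add k b)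
    push_cast [Nat.cast_sub (Nat.one_le_iff_ne_zero.mpr Nat.card_pos.ne')] at hrec
    linear_combination (Nat.card M : ℚ) * hrec - ih

end RestrictedSumCount

namespace ZMod

theorem isUnit_iff_gcd_val_eq_one {n : ℕ} [NeZero n] (x : ZMod n) :
    IsUnit x ↔ Nat.gcd x.val n = 1 := by
  rw [← Nat.coprime_iff_gcd_eq_one, ← isUnit_iff_coprime, natCast_zmod_val]

theorem isUnit_castHom_prime_pow_iff {p a : ℕ} (hp : p.Prime) (ha : a ≠ 0) (x : ZMod (p ^ a)) :
    IsUnit (castHom (dvd_pow_self p ha) (ZMod p) x) ↔ IsUnit x := by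
  have : NeZero (p ^ a) := ⟨pow_ne_zero _ hp.ne_zero⟩
  rw [← natCast_zmod_val x, map_natCast, isUnit_natCast_iff_not_dvd_pow hp (Nat.pos_of_ne_zero ha),
    isUnit_iff_coprime, Nat.coprime_comm, hp.coprime_iff_not_dvd]

theorem restrictedSumCount_isUnit_mul {m n : ℕ} (h : m.Coprime n) (k : ℕ) (b : ℤ) :
    restrictedSumCount {x : ZMod (m * n) | IsUnit x} k b =
      restrictedSumCount {x : ZMod m | IsUnit x} k b *
        restrictedSumCount {x : ZMod n | IsUnit x} k b := by
  let e := chineseRemainder h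
  have hunits : {x : ZMod (m * n) | IsUnit x} =
      e.toAddEquiv ⁻¹' ({x : ZMod m | IsUnit x} ×ˢ {x : ZMod n | IsUnit x}) := by
    ext x
    simp [← Prod.isUnit_iff]
  have hb : e.toAddEquiv (b : ZMod (m * n)) = ((b : ZMod m), (b : ZMod n)) := by
    simp [Prod.ext_iff]
  rw [hunits, restrictedSumCount_preimage_addEquiv, hb, restrictedSumCount_prod]

theorem restrictedSumCount_isUnit_prime_pow {p a : ℕ} (hp : p.Prime) (ha : a ≠ 0) (k : ℕ) (b : ℤ) :
    restrictedSumCount {x : ZMod (p ^ a) | IsUnit x} (k + 1) b * p ^ k =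
      p ^ (a * k) * restrictedSumCount {x : ZMod p | IsUnit x} (k + 1) b := by
  have : NeZero (p ^ a) := ⟨pow_ne_zero _ hp.ne_zero⟩
  let π := castHom (dvd_pow_self p ha) (ZMod p)
  have hunits : {x : ZMod (p ^ a) | IsUnit x} = π.toAddMonoidHom ⁻¹' {x : ZMod p | IsUnit x} := by
    ext x
    exact (isUnit_castHom_prime_pow_iff hp ha x).symm
  have h := restrictedSumCount_preimage_succ π.toAddMonoidHom
    (castHom_surjective (dvd_pow_self p ha)) {x | IsUnit x} k b
  rwa [← hunits, Nat.card_zmod, Nat.card_zmod, ← pow_mul, RingHom.toAddMonoidHom_eq_coe,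
    AddMonoidHom.coe_coe, map_intCast] at h

theorem cast_prime_mul_restrictedSumCount_isUnit {p : ℕ} (hp : p.Prime) (k : ℕ) (b : ℤ) :
    (p : ℚ) * restrictedSumCount {x : ZMod p | IsUnit x} k b =
      ((p : ℚ) - 1) ^ k + (-1) ^ k * ((if (p : ℤ) ∣ b then (p : ℚ) else 0) - 1) := by
  have : Fact p.Prime := ⟨hp⟩
  have hunits : {x : ZMod p | IsUnit x} = {0}ᶜ := by
    ext x
    exact isUnit_iff_ne_zero
  have h := cast_card_mul_restrictedSumCount_compl_zero k (b : ZMod p)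
  rw [Nat.card_zmod] at h
  rw [hunits, h]
  simp only [intCast_zmod_eq_zero_iff_dvd]

end ZMod

noncomputable def rademacherBrauer (n k : ℕ) (b : ℤ) : ℚ :=
  (Nat.totient n : ℚ) ^ k / n *
    (∏ p ∈ n.primeFactors.filter (fun p : ℕ => (p : ℤ) ∣ b),
      (1 - (-1 : ℚ) ^ (k - 1) / ((p : ℚ) - 1) ^ (k - 1))) *
    (∏ p ∈ n.primeFactors.filter (fun p : ℕ => ¬ (p : ℤ) ∣ b),
      (1 - (-1 : ℚ) ^ k / ((p : ℚ) - 1) ^ k))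

theorem rademacherBrauer_one (k : ℕ) (b : ℤ) : rademacherBrauer 1 k b = 1 := by
  simp [rademacherBrauer]

theorem rademacherBrauer_mul {m n : ℕ} (hm : m ≠ 0) (hn : n ≠ 0) (h : m.Coprime n) (k : ℕ)
    (b : ℤ) : rademacherBrauer (m * n) k b = rademacherBrauer m k b * rademacherBrauer n k b := by
  have hdisj := h.disjoint_primeFactors
  rw [rademacherBrauer, Nat.primeFactors_mul hm hn, filter_union, filter_union,
    prod_union (disjoint_filter_filter hdisj), prod_union (disjoint_filter_filter hdisj),
    Nat.totient_mul h, rademacherBrauer, rademacherBrauer]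
  push_cast
  ring

theorem rademacherBrauer_prime_pow {p a : ℕ} (hp : p.Prime) (ha : a ≠ 0) (k : ℕ) (b : ℤ) :
    rademacherBrauer (p ^ a) k b = (Nat.totient (p ^ a) : ℚ) ^ k / (p : ℚ) ^ a *
      if (p : ℤ) ∣ b then 1 - (-1 : ℚ) ^ (k - 1) / ((p : ℚ) - 1) ^ (k - 1)
      else 1 - (-1 : ℚ) ^ k / ((p : ℚ) - 1) ^ k := by
  rw [rademacherBrauer, Nat.primeFactors_prime_pow ha hp, filter_singleton, filter_singleton]
  split_ifs <;> simp

theorem cast_restrictedSumCount_isUnit_prime_pow {p a k : ℕ} (hp : p.Prime) (ha : a ≠ 0)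
    (hk : k ≠ 0) (b : ℤ) :
    (restrictedSumCount {x : ZMod (p ^ a) | IsUnit x} k b : ℚ) = rademacherBrauer (p ^ a) k b := by
  obtain ⟨j, rfl⟩ := Nat.exists_eq_add_one_of_ne_zero hk
  obtain ⟨c, rfl⟩ := Nat.exists_eq_add_one_of_ne_zero ha
  have hlift := congrArg (Nat.cast : ℕ → ℚ) (ZMod.restrictedSumCount_isUnit_prime_pow hp ha j b)
  have hprime := ZMod.cast_prime_mul_restrictedSumCount_isUnit hp (j + 1) b
  have hp0 : (p : ℚ) ≠ 0 := by exact_mod_cast hp.ne_zero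
  have hp1 : (p : ℚ) - 1 ≠ 0 := sub_ne_zero.mpr (by exact_mod_cast hp.ne_one)
  have hlift' : (restrictedSumCount {x : ZMod (p ^ (c + 1)) | IsUnit x} (j + 1) b : ℚ) =
      (p : ℚ) ^ (c * j) * restrictedSumCount {x : ZMod p | IsUnit x} (j + 1) b := by
    push_cast [add_mul, one_mul, pow_add] at hlift
    exact mul_right_cancel₀ (pow_ne_zero j hp0) (by linear_combination hlift)
  rw [hlift', rademacherBrauer_prime_pow hp ha, Nat.totient_prime_pow_succ hp]
  push_cast [Nat.cast_sub hp.one_le]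
  rw [mul_pow, ← pow_mul]
  split_ifs at hprime ⊢
  · field_simp
    linear_combination ((p : ℚ) ^ (c * j) * (p : ℚ) ^ c * ((p : ℚ) - 1) ^ j) * hprime
  · field_simp
    linear_combination ((p : ℚ) ^ (c * j) * (p : ℚ) ^ c) * hprime

theorem cast_restrictedSumCount_isUnit {n k : ℕ} (hn : n ≠ 0) (hk : k ≠ 0) (b : ℤ) :
    (restrictedSumCount {x : ZMod n | IsUnit x} k b : ℚ) = rademacherBrauer n k b := by
  induction n using Nat.recOnPosPrimePosCoprime with
  | prime_pow p a hp ha => exact cast_restrictedSumCount_isUnit_prime_pow hp ha.ne' hk b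
  | zero => exact absurd rfl hn
  | one =>
    rw [rademacherBrauer_one, restrictedSumCount, Nat.cast_eq_one]
    exact Nat.card_eq_one_iff_unique.mpr
      ⟨inferInstance, ⟨⟨0, Subsingleton.elim _ _, fun _ => isUnit_of_subsingleton _⟩⟩⟩
  | coprime m n hm hn' h ihm ihn =>
    rw [ZMod.restrictedSumCount_isUnit_mul h, Nat.cast_mul, ihm (by omega), ihn (by omega),
      rademacherBrauer_mul (by omega) (by omega) h]

/-- Rademacher–Brauer formula: the number of solutions of
`x_1 + ⋯ + x_k ≡ b (mod n)` with `gcd(x_i, n) = 1` for all `i`. -/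
theorem count_restricted_congruence_units (n : ℕ) (hn : 0 < n) (k : ℕ) (hk : 0 < k) (b : ℤ) :
    (Nat.card {x : Fin k → ZMod n //
        (∑ i, x i) = (b : ZMod n) ∧ ∀ i, Nat.gcd (x i).val n = 1} : ℚ) =
      (Nat.totient n : ℚ) ^ k / n *
        (∏ p ∈ n.primeFactors.filter (fun p : ℕ => (p : ℤ) ∣ b),
          (1 - (-1 : ℚ) ^ (k - 1) / ((p : ℚ) - 1) ^ (k - 1))) *
        (∏ p ∈ n.primeFactors.filter (fun p : ℕ => ¬ (p : ℤ) ∣ b),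
          (1 - (-1 : ℚ) ^ k / ((p : ℚ) - 1) ^ k)) := by
  have : NeZero n := ⟨hn.ne'⟩
  simpa only [restrictedSumCount, Set.mem_ofPred_eq, ZMod.isUnit_iff_gcd_val_eq_one,
    rademacherBrauer] using cast_restrictedSumCount_isUnit hn.ne' hk.ne' b
end

section
/- Let t_i | n for 1 ≤ i ≤ k, with n ≥ 1. The number of solutions of x_1 + ... + x_k ≡ 0 (mod n) with gcd(x_i, n) = t_i for all i equals (1/n) Σ_{q=1}^{n} Π_{i=1}^{k} c_{n/t_i}(q), where c_m denotes the Ramanujan sum. -/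
/-!
Detect `x₁ + ⋯ + xₖ = 0` in `ZMod n` by orthogonality of the additive characters
`x ↦ e(qx/n)`: averaging `e(q(x₁ + ⋯ + xₖ)/n)` over `q` gives the indicator of the congruence, and
for fixed `q` the sum over the `x` with `gcd(xᵢ, n) = tᵢ` factors into a product over `i`.
The residues with `gcd(x, n) = t` are exactly `x = t u` with `u` a unit modulo `m = n / t`,
and `e(q t u / n) = e(q u / m)`, so each factor is the Ramanujan sum `c_m(q)`.
-/

/-- The Ramanujan sum `c_n(m) = ∑_{j=1, gcd(j,n)=1}^{n} e(jm/n)`. -/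
noncomputable def ramanujanSum (n : ℕ) (m : ℤ) : ℂ :=
  ∑ j ∈ (Finset.Icc 1 n).filter (fun j => Nat.gcd j n = 1),
    Complex.exp (2 * Real.pi * Complex.I * j * m / n)

open Finset

theorem AddChar.map_sum_eq_prod {ι A M : Type*} [AddCommMonoid A] [CommMonoid M]
    (ψ : AddChar A M) (s : Finset ι) (f : ι → A) : ψ (∑ i ∈ s, f i) = ∏ i ∈ s, ψ (f i) :=
  map_prod ψ.toMonoidHom (fun i => Multiplicative.ofAdd (f i)) s

theorem AddChar.card_filter_piFinset_sum_eq_zero_mul_card {R ι : Type*} [CommRing R] [Fintype R]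
    [DecidableEq R] [Fintype ι] [DecidableEq ι] {ψ : AddChar R ℂ} (hψ : ψ.IsPrimitive)
    (S : ι → Finset R) :
    (#{x ∈ Fintype.piFinset S | ∑ i, x i = 0} : ℂ) * Fintype.card R =
      ∑ q, ∏ i, ∑ a ∈ S i, ψ (a * q) := by
  calc (#{x ∈ Fintype.piFinset S | ∑ i, x i = 0} : ℂ) * Fintype.card R
      = ∑ x ∈ Fintype.piFinset S, ∑ q, ψ (q * ∑ i, x i) := by
        simp_rw [AddChar.sum_mulShift _ hψ, Nat.cast_ite, Nat.cast_zero, ← sum_boole, sum_mul,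
          ite_mul, one_mul, zero_mul]
    _ = ∑ q, ∑ x ∈ Fintype.piFinset S, ∏ i, ψ (x i * q) := by
        rw [sum_comm]
        simp_rw [mul_comm _ (∑ i, _), sum_mul, AddChar.map_sum_eq_prod]
    _ = ∑ q, ∏ i, ∑ a ∈ S i, ψ (a * q) := by
        simp_rw [prod_univ_sum]

namespace ZMod

section

variable {M : Type*} [AddCommMonoid M]

theorem sum_Icc_one_natCast (n : ℕ) [NeZero n] (f : ZMod n → M) :
    ∑ j ∈ Icc 1 n, f j = ∑ x, f x := by
  refine sum_nbij' (↑) (fun x => if x = 0 then n else x.val) (by simp) ?_ ?_ ?_ (by simp)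
  · intro x _
    split_ifs with hx
    · exact mem_Icc.mpr ⟨NeZero.one_le, le_rfl⟩
    · exact mem_Icc.mpr ⟨Nat.one_le_iff_ne_zero.mpr ((val_ne_zero x).mpr hx), x.val_lt.le⟩
  · intro j hj
    obtain ⟨hj1, hjn⟩ := mem_Icc.mp (mem_coe.mp hj)
    rcases hjn.lt_or_eq with hlt | rfl
    · have hne : (j : ZMod n) ≠ 0 := by
        rw [Ne, ← val_eq_zero, val_natCast_of_lt hlt]
        omega
      simp [hne, val_natCast_of_lt hlt]
    · simp
  · intro x _
    split_ifs with hx <;> simp [hx]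

theorem sum_isUnit_eq_sum_gcd_val (t m : ℕ) [NeZero t] [NeZero m] (f : ZMod (t * m) → M) :
    ∑ y : ZMod m with IsUnit y, f ((t * y.val : ℕ) : ZMod (t * m)) =
      ∑ x : ZMod (t * m) with x.val.gcd (t * m) = t, f x := by
  have val_scale (y : ZMod m) : ((t * y.val : ℕ) : ZMod (t * m)).val = t * y.val :=
    val_natCast_of_lt (Nat.mul_lt_mul_of_pos_left y.val_lt (NeZero.pos t))
  have val_quot {x : ZMod (t * m)} : ((x.val / t : ℕ) : ZMod m).val = x.val / t :=
    val_natCast_of_lt (Nat.div_lt_of_lt_mul x.val_lt)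
  have dvd_of_gcd {x : ZMod (t * m)} (hx : x.val.gcd (t * m) = t) : t ∣ x.val := by
    have := Nat.gcd_dvd_left x.val (t * m)
    rwa [hx] at this
  have isUnit_iff (y : ZMod m) : IsUnit y ↔ y.val.gcd m = 1 := by
    rw [← Nat.coprime_iff_gcd_eq_one, ← isUnit_iff_coprime, natCast_zmod_val]
  refine sum_nbij' (fun y => ((t * y.val : ℕ) : ZMod (t * m)))
    (fun x => ((x.val / t : ℕ) : ZMod m)) ?_ ?_ ?_ ?_ (fun _ _ => rfl)
  · intro y hy
    rw [mem_filter_univ, isUnit_iff] at hy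
    rw [mem_filter_univ, val_scale, Nat.gcd_mul_left, hy, mul_one]
  · intro x hx
    rw [mem_filter_univ] at hx
    rw [mem_filter_univ, isUnit_iff, val_quot, ← Nat.mul_right_inj (NeZero.ne t),
      ← Nat.gcd_mul_left, mul_one, Nat.mul_div_cancel' (dvd_of_gcd hx), hx]
  · intro y _
    simp only [val_scale, Nat.mul_div_cancel_left _ (NeZero.pos t), natCast_zmod_val]
  · intro x hx
    rw [mem_filter_univ] at hx
    simp only [val_quot, Nat.mul_div_cancel' (dvd_of_gcd hx), natCast_zmod_val]

end

theorem stdAddChar_natCast_mul_intCast (t m : ℕ) [NeZero t] [NeZero m] (j : ℤ) :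
    stdAddChar (N := t * m) ((t * j : ℤ) : ZMod (t * m)) = stdAddChar (N := m) (j : ZMod m) := by
  have : (t : ℂ) ≠ 0 := NeZero.ne _
  rw [stdAddChar_coe, stdAddChar_coe]
  push_cast
  congr 1
  field_simp

end ZMod

open ZMod

theorem ramanujanSum_eq_sum_isUnit (m : ℕ) [NeZero m] (q : ℤ) :
    ramanujanSum m q = ∑ x : ZMod m with IsUnit x, stdAddChar (x * (q : ZMod m)) := by
  rw [ramanujanSum, sum_filter, sum_filter, ← sum_Icc_one_natCast m]
  refine sum_congr rfl fun j _ => ?_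
  simp only [isUnit_iff_coprime, Nat.Coprime]
  have hcast : (j : ZMod m) * (q : ZMod m) = ((j * q : ℤ) : ZMod m) := by push_cast; rfl
  rw [hcast, stdAddChar_coe]
  push_cast
  ring_nf

theorem sum_stdAddChar_gcd_val_eq_ramanujanSum (n t : ℕ) [NeZero n] (ht : t ∣ n) (q : ℤ) :
    ∑ x : ZMod n with x.val.gcd n = t, stdAddChar (x * (q : ZMod n)) = ramanujanSum (n / t) q := by
  obtain ⟨m, rfl⟩ := ht
  have : NeZero t := ⟨left_ne_zero_of_mul (NeZero.ne (t * m))⟩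
  have : NeZero m := ⟨right_ne_zero_of_mul (NeZero.ne (t * m))⟩
  rw [Nat.mul_div_cancel_left m (NeZero.pos t), ramanujanSum_eq_sum_isUnit,
    ← sum_isUnit_eq_sum_gcd_val]
  refine sum_congr rfl fun y _ => ?_
  have hcast : y * (q : ZMod m) = ((y.val * q : ℤ) : ZMod m) := by
    push_cast
    rw [natCast_zmod_val]
  rw [hcast, ← stdAddChar_natCast_mul_intCast t m]
  push_cast
  ring_nf

/-- The number of solutions of `x_1 + ⋯ + x_k ≡ 0 (mod n)` with `gcd(x_i, n) = t_i`
equals `(1/n) ∑_{q=1}^{n} ∏_i c_{n/t_i}(q)`. -/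
theorem count_restricted_congruence_ramanujan (n : ℕ) (hn : 0 < n) (k : ℕ)
    (t : Fin k → ℕ) (ht : ∀ i, t i ∣ n) :
    (Nat.card {x : Fin k → ZMod n //
        (∑ i, x i) = 0 ∧ ∀ i, Nat.gcd (x i).val n = t i} : ℂ) =
      (1 / n) * ∑ q ∈ Finset.Icc 1 n, ∏ i, ramanujanSum (n / t i) (q : ℤ) := by
  have : NeZero n := ⟨hn.ne'⟩
  set S : Fin k → Finset (ZMod n) := fun i => {a | a.val.gcd n = t i}
  have hcard : Nat.card {x : Fin k → ZMod n // (∑ i, x i) = 0 ∧ ∀ i, (x i).val.gcd n = t i} =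
      #{x ∈ Fintype.piFinset S | ∑ i, x i = 0} := by
    rw [Nat.card_eq_fintype_card, Fintype.card_subtype]
    congr 1
    ext x
    simp [S, and_comm]
  have hfactor (j : ℕ) : ∏ i, ∑ a ∈ S i, stdAddChar (a * (j : ZMod n)) =
      ∏ i, ramanujanSum (n / t i) j := by
    simp_rw [← sum_stdAddChar_gcd_val_eq_ramanujanSum n _ (ht _), Int.cast_natCast, S]
  have hcount := AddChar.card_filter_piFinset_sum_eq_zero_mul_card (isPrimitive_stdAddChar n) S
  rw [ZMod.card, ← sum_Icc_one_natCast] at hcount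
  simp_rw [hfactor] at hcount
  rw [hcard, ← hcount, mul_comm, one_div, mul_inv_cancel_right₀ (NeZero.ne (n : ℂ))]
end

section
/- Let n_1,...,n_k be positive integers, 𝔫 = lcm(n_1,...,n_k), and suppose 𝔫 | n. Then the number of solutions of x_1 + ... + x_k ≡ 0 (mod n) with gcd(x_i, n) = n/n_i for all i is equal to the number of solutions of x_1 + ... + x_k ≡ 0 (mod 𝔫) with gcd(x_i, 𝔫) = 𝔫/n_i for all i. -/
private lemma aux_count (k : ℕ) (nn : Fin k → ℕ) (hnn : ∀ i, 0 < nn i)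
    (n : ℕ) (hn : 0 < n) (hdvd : Finset.univ.lcm nn ∣ n) :
    Nat.card {x : Fin k → ZMod n //
        (∑ i, x i) = 0 ∧ ∀ i, Nat.gcd (x i).val n = n / nn i} =
    Nat.card {y : Fin k → ℕ // (∀ i, y i < nn i ∧ Nat.Coprime (y i) (nn i)) ∧
        Finset.univ.lcm nn ∣ ∑ i, (Finset.univ.lcm nn / nn i) * y i} := by
  set m := Finset.univ.lcm nn with hm
  have hmi : ∀ i, nn i ∣ m := fun i => Finset.dvd_lcm (Finset.mem_univ i)
  have hni : ∀ i, nn i ∣ n := fun i => (hmi i).trans hdvd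
  have hq : ∀ i, 0 < n / nn i := fun i => Nat.div_pos (Nat.le_of_dvd hn (hni i)) (hnn i)
  have hqn : ∀ i, (n / nn i) * nn i = n := fun i => Nat.div_mul_cancel (hni i)
  obtain ⟨d, hd⟩ := hdvd
  have hd0 : 0 < d := by
    rcases Nat.eq_zero_or_pos d with h | h
    · rw [h, Nat.mul_zero] at hd; omega
    · exact h
  have hqd : ∀ i, n / nn i = (m / nn i) * d := by
    intro i
    rw [hd, mul_comm m d, Nat.mul_div_assoc d (hmi i), mul_comm]
  haveI : NeZero n := ⟨hn.ne'⟩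
  have hsum : ∀ y : Fin k → ℕ, (n ∣ ∑ i, (n / nn i) * y i) ↔ (m ∣ ∑ i, (m / nn i) * y i) := by
    intro y
    have h1 : ∑ i, (n / nn i) * y i = (∑ i, (m / nn i) * y i) * d := by
      rw [Finset.sum_mul]
      exact Finset.sum_congr rfl fun i _ => by rw [hqd i]; ring
    rw [h1, hd]
    exact Nat.mul_dvd_mul_iff_right hd0
  -- x i = cast of (n/nn i * y i) with y i < nn i
  have hvaleq : ∀ (i : Fin k) (y : ℕ), y < nn i →
      (((n / nn i * y : ℕ) : ZMod n)).val = n / nn i * y := by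
    intro i y hy
    exact ZMod.val_cast_of_lt (by
      calc n / nn i * y < n / nn i * nn i := by
            exact Nat.mul_lt_mul_of_pos_left hy (hq i)
        _ = n := hqn i)
  refine Nat.card_congr ?_
  refine
    { toFun := fun x => ⟨fun i => (x.1 i).val / (n / nn i), ?_, ?_⟩
      invFun := fun y => ⟨fun i => ((n / nn i * y.1 i : ℕ) : ZMod n), ?_, ?_⟩
      left_inv := ?_
      right_inv := ?_ }
  · -- bounds and coprimality
    intro i
    obtain ⟨-, hx2⟩ := x.2
    have hdv : n / nn i ∣ (x.1 i).val := (hx2 i) ▸ Nat.gcd_dvd_left _ _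
    have hvv : n / nn i * ((x.1 i).val / (n / nn i)) = (x.1 i).val :=
      Nat.mul_div_cancel' hdv
    constructor
    · show (x.1 i).val / (n / nn i) < nn i
      have hlt : (x.1 i).val < n := ZMod.val_lt _
      rw [← hvv] at hlt
      conv_rhs at hlt => rw [← hqn i]
      exact Nat.lt_of_mul_lt_mul_left hlt
    · show Nat.Coprime ((x.1 i).val / (n / nn i)) (nn i)
      have key : (n / nn i) * Nat.gcd ((x.1 i).val / (n / nn i)) (nn i) = (n / nn i) * 1 := by
        calc (n / nn i) * Nat.gcd ((x.1 i).val / (n / nn i)) (nn i)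
            = Nat.gcd ((n / nn i) * ((x.1 i).val / (n / nn i))) ((n / nn i) * nn i) :=
              (Nat.gcd_mul_left _ _ _).symm
          _ = Nat.gcd (x.1 i).val n := by rw [hvv, hqn i]
          _ = (n / nn i) * 1 := by rw [hx2 i, mul_one]
      exact Nat.eq_of_mul_eq_mul_left (hq i) key
  · -- sum divisibility
    obtain ⟨hx1, hx2⟩ := x.2
    rw [← hsum]
    have hdv : ∀ i, n / nn i ∣ (x.1 i).val := fun i => (hx2 i) ▸ Nat.gcd_dvd_left _ _
    have hvv : ∀ i, n / nn i * ((x.1 i).val / (n / nn i)) = (x.1 i).val :=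
      fun i => Nat.mul_div_cancel' (hdv i)
    rw [← ZMod.natCast_eq_zero_iff]
    push_cast
    calc (∑ i, ((n / nn i : ℕ) : ZMod n) * (((x.1 i).val / (n / nn i) : ℕ) : ZMod n))
        = ∑ i, x.1 i := by
          refine Finset.sum_congr rfl fun i _ => ?_
          rw [← Nat.cast_mul, hvv i, ZMod.natCast_zmod_val]
      _ = 0 := hx1
  · -- sum = 0 for invFun
    obtain ⟨hy1, hy2⟩ := y.2
    have : ((∑ i, (n / nn i) * y.1 i : ℕ) : ZMod n) = 0 := by
      rw [ZMod.natCast_eq_zero_iff, hsum]; exact hy2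
    rw [← this]; push_cast; ring
  · -- gcd condition for invFun
    intro i
    obtain ⟨hy1, hy2⟩ := y.2
    rw [hvaleq i _ (hy1 i).1]
    calc Nat.gcd (n / nn i * y.1 i) n
        = Nat.gcd (n / nn i * y.1 i) (n / nn i * nn i) := by rw [hqn i]
      _ = (n / nn i) * Nat.gcd (y.1 i) (nn i) := Nat.gcd_mul_left _ _ _
      _ = n / nn i := by rw [(hy1 i).2, mul_one]
  · -- left inverse
    rintro ⟨x, hx1, hx2⟩
    apply Subtype.ext
    funext i
    have hdv : n / nn i ∣ (x i).val := (hx2 i) ▸ Nat.gcd_dvd_left _ _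
    simp only
    rw [Nat.mul_div_cancel' hdv, ZMod.natCast_zmod_val]
  · -- right inverse
    rintro ⟨y, hy1, hy2⟩
    apply Subtype.ext
    funext i
    simp only
    rw [hvaleq i _ ((hy1 i).1), Nat.mul_div_cancel_left _ (hq i)]

/-- Replacing the modulus `n` by `𝔫 = lcm(n_1,…,n_k)`: the number of solutions of
`x_1 + ⋯ + x_k ≡ 0 (mod n)` with `gcd(x_i, n) = n/n_i` equals the number of solutions of
`x_1 + ⋯ + x_k ≡ 0 (mod 𝔫)` with `gcd(x_i, 𝔫) = 𝔫/n_i`. -/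
theorem count_invariant_lcm (k : ℕ) (nn : Fin k → ℕ) (hnn : ∀ i, 0 < nn i)
    (n : ℕ) (hn : 0 < n) (hdvd : Finset.univ.lcm nn ∣ n) :
    Nat.card {x : Fin k → ZMod n //
        (∑ i, x i) = 0 ∧ ∀ i, Nat.gcd (x i).val n = n / nn i} =
      Nat.card {x : Fin k → ZMod (Finset.univ.lcm nn) //
        (∑ i, x i) = 0 ∧ ∀ i,
          Nat.gcd (x i).val (Finset.univ.lcm nn) = Finset.univ.lcm nn / nn i} := by
  have hm0 : 0 < Finset.univ.lcm nn := by
    rcases Nat.eq_zero_or_pos (Finset.univ.lcm nn) with h | h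
    · exfalso
      have := hn
      rw [h] at hdvd
      omega
    · exact h
  rw [aux_count k nn hnn n hn hdvd, aux_count k nn hnn _ hm0 dvd_rfl]
end

section
/- (Harvey-type criterion) With notation as in the counting formula, |Epi_S(Γ, Z/nZ)| > 0 if and only if: (i) 𝔫 | n, and if g = 0 then 𝔫 = n; (ii) e_p > 1 for every prime p | 𝔫; (iii) if 𝔫 is even then e_2 is even; where e_p = #{i : p ∤ 𝔫/n_i}. -/
/-!
Every factor of the counting formula other than the last two is visibly nonzero once
`𝔫 ∣ n`. The factor `∏_{p ∣ n/𝔫} (1 - p^{-2g})` vanishes exactly when `g = 0` and `n/𝔫` has a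
prime factor, i.e. when `g = 0` and `𝔫 ≠ n`. In the last factor, `(-1)^m / (p-1)^m = (-1/(p-1))^m`
equals `1` only if `m = 0`, or if `-1/(p-1) = -1` (that is, `p = 2`) and `m` is even; with
`m = e_p - 1` this gives conditions (ii) and (iii).
-/

theorem Nat.Prime.one_sub_neg_one_pow_div_ne_zero_iff {K : Type*} [Field K] [LinearOrder K]
    [IsStrictOrderedRing K] {p : ℕ} (hp : p.Prime) (m : ℕ) :
    1 - (-1 : K) ^ m / ((p : K) - 1) ^ m ≠ 0 ↔ m ≠ 0 ∧ (p = 2 → Odd m) := by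
  have hp1 : (0 : K) < (p : K) - 1 := by
    have : (1 : K) < p := by exact_mod_cast hp.one_lt
    linarith
  rw [← div_pow, sub_ne_zero, ne_comm, Ne, pow_eq_one_iff_cases]
  have h_ne_one : -1 / ((p : K) - 1) ≠ 1 := by
    rw [Ne, div_eq_one_iff_eq hp1.ne']; linarith
  have h_eq_neg_one : -1 / ((p : K) - 1) = -1 ↔ p = 2 := by
    rw [div_eq_iff hp1.ne', neg_one_mul, neg_inj, eq_comm, sub_eq_iff_eq_add, one_add_one_eq_two]
    exact_mod_cast Iff.rfl
  rw [h_eq_neg_one]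
  have := Nat.not_even_iff_odd (n := m)
  tauto

theorem Nat.prod_primeFactors_one_sub_neg_one_pow_div_ne_zero_iff {K : Type*} [Field K]
    [LinearOrder K] [IsStrictOrderedRing K] {L : ℕ} (hL : L ≠ 0) (e : ℕ → ℕ) :
    ∏ p ∈ L.primeFactors, (1 - (-1 : K) ^ (e p - 1) / ((p : K) - 1) ^ (e p - 1)) ≠ 0 ↔
      (∀ p, p.Prime → p ∣ L → 1 < e p) ∧ (Even L → Even (e 2)) := by
  have h_factor : ∀ p ∈ L.primeFactors,
      1 - (-1 : K) ^ (e p - 1) / ((p : K) - 1) ^ (e p - 1) ≠ 0 ↔ 1 < e p ∧ (p = 2 → Even (e p)) :=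
    fun p hp => by
      rw [(Nat.prime_of_mem_primeFactors hp).one_sub_neg_one_pow_div_ne_zero_iff]
      simp only [Nat.odd_iff, Nat.even_iff]
      omega
  rw [Finset.prod_ne_zero_iff, forall₂_congr h_factor]
  simp only [Nat.mem_primeFactors, even_iff_two_dvd (a := L)]
  constructor
  · intro h
    exact ⟨fun p hp hpL => (h p ⟨hp, hpL, hL⟩).1, fun h2 => (h 2 ⟨Nat.prime_two, h2, hL⟩).2 rfl⟩
  · rintro ⟨h_gt, h_two⟩ p ⟨hp, hpL, -⟩
    exact ⟨h_gt p hp hpL, by rintro rfl; exact h_two hpL⟩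

theorem Nat.prod_primeFactors_one_sub_one_div_pow_ne_zero_iff {K : Type*} [Field K] [CharZero K]
    {m : ℕ} (hm : m ≠ 0) (k : ℕ) :
    ∏ p ∈ m.primeFactors, (1 - 1 / (p : K) ^ k) ≠ 0 ↔ (k = 0 → m = 1) := by
  have h_factor : ∀ p ∈ m.primeFactors, 1 - 1 / (p : K) ^ k ≠ 0 ↔ k ≠ 0 := fun p hp => by
    have hp := Nat.prime_of_mem_primeFactors hp
    have hpk : (p : K) ^ k ≠ 0 := pow_ne_zero _ (Nat.cast_ne_zero.mpr hp.ne_zero)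
    rw [sub_ne_zero, ne_comm, Ne, div_eq_one_iff_eq hpk, eq_comm, ← Nat.cast_pow, Nat.cast_eq_one,
      Nat.pow_eq_one]
    simp [hp.ne_one]
  rw [Finset.prod_ne_zero_iff, forall₂_congr h_factor]
  rcases eq_or_ne k 0 with rfl | hk
  · simp only [ne_eq, not_true_eq_false, imp_false, true_imp_iff,
      ← Finset.eq_empty_iff_forall_notMem, Nat.primeFactors_eq_empty, hm, false_or]
  · simp [hk]

/-- Harvey-type criterion: given the counting formula for the number `E` of surface-kernel
epimorphisms from the co-compact Fuchsian group with signature `(g; n_1,…,n_k)` to `ℤ/nℤ`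
(and `E = 0` when `𝔫 ∤ n`), one has `E > 0` iff (i) `𝔫 ∣ n` and `g = 0 → 𝔫 = n`;
(ii) `e_p > 1` for every prime `p ∣ 𝔫`; (iii) if `𝔫` is even then `e_2` is even;
where `𝔫 = lcm(n_1,…,n_k)` and `e_p = #{i : p ∤ 𝔫/n_i}`. -/
theorem surface_kernel_epi_exists_iff (g k n : ℕ) (hn : 0 < n) (nn : Fin k → ℕ)
    (hnn : ∀ i, 0 < nn i) (E : ℕ)
    (hE0 : ¬ Finset.univ.lcm nn ∣ n → E = 0)
    (hE : Finset.univ.lcm nn ∣ n → (E : ℚ) =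
      (n : ℚ) ^ (2 * g) / ((Finset.univ.lcm nn : ℕ) : ℚ) *
        (∏ i, (Nat.totient (nn i) : ℚ)) *
        (∏ p ∈ (n / Finset.univ.lcm nn).primeFactors, (1 - 1 / (p : ℚ) ^ (2 * g))) *
        ∏ p ∈ (Finset.univ.lcm nn).primeFactors,
          (1 - (-1 : ℚ) ^ ((Finset.univ.filter
              (fun i => ¬ p ∣ Finset.univ.lcm nn / nn i)).card - 1) /
            ((p : ℚ) - 1) ^ ((Finset.univ.filter
              (fun i => ¬ p ∣ Finset.univ.lcm nn / nn i)).card - 1))) :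
    0 < E ↔
      ((Finset.univ.lcm nn ∣ n ∧ (g = 0 → Finset.univ.lcm nn = n)) ∧
        (∀ p : ℕ, p.Prime → p ∣ Finset.univ.lcm nn →
          1 < (Finset.univ.filter (fun i => ¬ p ∣ Finset.univ.lcm nn / nn i)).card) ∧
        (Even (Finset.univ.lcm nn) →
          Even (Finset.univ.filter (fun i => ¬ 2 ∣ Finset.univ.lcm nn / nn i)).card)) := by
  set L := Finset.univ.lcm nn
  have hL : L ≠ 0 := by simpa [L, Finset.lcm_eq_zero_iff] using fun i => (hnn i).ne'
  by_cases hdvd : L ∣ n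
  swap
  · simp [hE0 hdvd, hdvd]
  have hnL : n / L ≠ 0 := (Nat.div_pos (Nat.le_of_dvd hn hdvd) (Nat.pos_of_ne_zero hL)).ne'
  have h_quot : n / L = 1 ↔ L = n := by
    rw [Nat.div_eq_iff_eq_mul_left (Nat.pos_of_ne_zero hL) hdvd, one_mul, eq_comm]
  have h_lead : (n : ℚ) ^ (2 * g) / L ≠ 0 := by positivity
  have h_totient : ∏ i, (Nat.totient (nn i) : ℚ) ≠ 0 :=
    Finset.prod_ne_zero_iff.mpr fun i _ => by exact_mod_cast (Nat.totient_pos.mpr (hnn i)).ne'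
  rw [Nat.pos_iff_ne_zero, ← Nat.cast_ne_zero (R := ℚ), hE hdvd, mul_ne_zero_iff,
    mul_ne_zero_iff, mul_ne_zero_iff, Nat.prod_primeFactors_one_sub_one_div_pow_ne_zero_iff hnL,
    Nat.prod_primeFactors_one_sub_neg_one_pow_div_ne_zero_iff hL
      (fun p => (Finset.univ.filter (fun i => ¬ p ∣ L / nn i)).card)]
  simp [h_lead, h_totient, hdvd, h_quot]
end

section
/- Let n be even and k even, with all e_p as defined satisfying e_p ≥ 2, and g ≥ 1. If 𝔫 | n, e_p ≥ 2 for all primes p | 𝔫, and e_2 is even when 𝔫 is even, then (n^{2g}/𝔫)·Π_{i=1}^k φ(n_i)·Π_{p|n/𝔫}(1-1/p^{2g})·Π_{p|𝔫}(1-(-1)^{e_p-1}/(p-1)^{e_p-1}) is a positive rational number, and in fact a positive integer. -/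
/-!
The expression splits into local factors. With `m = ∏_{p ∣ n/𝔫} p`, the part
`n^{2g} ∏_{p ∣ n/𝔫} (1 - 1/p^{2g})` equals `(n/m)^{2g} ∏_{p ∣ n/𝔫} (p^{2g} - 1)`. The rest is a
product over the primes `p ∣ 𝔫`: with `v = v_p(𝔫)` and `e = e_p`, the indices with `p ∤ 𝔫/n_i` are
those with `v_p(n_i) = v`, so they contribute `φ(p^v)^e`, and
`φ(p^v)^e p^{-v} (1 - (-1)^{e-1}/(p-1)^{e-1}) = p^{(v-1)e-v} (p-1) ((p-1)^{e-1} - (-1)^{e-1})`.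
This is an integer since `(v-1)e ≥ v` for `v ≥ 2`, while for `v = 1` the prime `p` divides
`(p-1)^{e-1} - (-1)^{e-1}`; it is positive since `e ≥ 2`, and `e` is even when `p = 2`.
-/

open Finset

def positiveNaturals : Submonoid ℚ where
  carrier := {q | ∃ m : ℕ, 0 < m ∧ q = m}
  mul_mem' := by
    rintro _ _ ⟨a, ha, rfl⟩ ⟨b, hb, rfl⟩
    exact ⟨a * b, Nat.mul_pos ha hb, by push_cast; rfl⟩
  one_mem' := ⟨1, one_pos, Nat.cast_one.symm⟩

namespace positiveNaturals

lemma natCast_mem {m : ℕ} (hm : 0 < m) : (m : ℚ) ∈ positiveNaturals := ⟨m, hm, rfl⟩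

lemma intCast_div_mem {a b : ℤ} (hb : 0 < b) (hba : b ∣ a) (ha : 0 < a) :
    (a : ℚ) / b ∈ positiveNaturals := by
  obtain ⟨t, rfl⟩ := hba
  have ht : 0 < t := pos_of_mul_pos_right ha hb.le
  refine ⟨t.toNat, by omega, ?_⟩
  rw [Int.cast_mul, mul_div_cancel_left₀ _ (by exact_mod_cast hb.ne'),
    ← Int.cast_natCast, Int.toNat_of_nonneg ht.le]

end positiveNaturals

lemma Nat.totient_eq_prod_of_primeFactors_subset {m : ℕ} (hm : m ≠ 0) {s : Finset ℕ}
    (hs : m.primeFactors ⊆ s) : m.totient = ∏ p ∈ s, (p ^ m.factorization p).totient := by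
  rw [Nat.multiplicative_factorization Nat.totient (fun _ _ h => Nat.totient_mul h)
    Nat.totient_one hm, Nat.prod_factorization_eq_prod_primeFactors]
  refine Finset.prod_subset hs fun p _ hp => ?_
  rw [Finsupp.notMem_support_iff.mp hp, pow_zero, Nat.totient_one]

lemma Nat.factorization_eq_of_not_dvd_div {a b p : ℕ} (hab : a ∣ b) (hb : b ≠ 0)
    (hp : ¬ p ∣ b / a) : a.factorization p = b.factorization p := by
  have hle := (Nat.factorization_le_iff_dvd (ne_zero_of_dvd_ne_zero hb hab) hb).mpr hab p
  have hzero := Nat.factorization_eq_zero_of_not_dvd hp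
  rw [Nat.factorization_div hab, Finsupp.tsub_apply] at hzero
  omega

lemma pow_mul_sub_one_pow_dvd {R : Type*} [CommRing R] (x : R) {v e : ℕ} (hv : 1 ≤ v)
    (he : 2 ≤ e) :
    x ^ v * (x - 1) ^ (e - 1) ∣
      (x ^ (v - 1) * (x - 1)) ^ e * ((x - 1) ^ (e - 1) - (-1) ^ (e - 1)) := by
  obtain rfl | hv := hv.eq_or_lt
  · have hx : x ∣ (x - 1) ^ (e - 1) - (-1) ^ (e - 1) := by
      simpa using sub_dvd_pow_sub_pow (x - 1) (-1) (e - 1)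
    calc x ^ 1 * (x - 1) ^ (e - 1)
        ∣ ((x - 1) ^ (e - 1) - (-1) ^ (e - 1)) * (x - 1) ^ e := by
          rw [pow_one]; exact mul_dvd_mul hx (pow_dvd_pow _ (e.sub_le 1))
      _ = _ := by ring
  · apply dvd_mul_of_dvd_left
    rw [mul_pow, ← pow_mul]
    refine mul_dvd_mul (pow_dvd_pow _ ?_) (pow_dvd_pow _ (e.sub_le 1))
    calc v ≤ (v - 1) * 2 := by omega
      _ ≤ (v - 1) * e := Nat.mul_le_mul_left _ he

lemma neg_one_pow_lt_sub_one_pow {p e : ℕ} (hp : p.Prime) (he : 2 ≤ e) (h2 : p = 2 → Even e) :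
    (-1 : ℤ) ^ (e - 1) < ((p : ℤ) - 1) ^ (e - 1) := by
  obtain rfl | hp2 := eq_or_ne p 2
  · rw [(Nat.Even.sub_odd (by omega) (h2 rfl) odd_one).neg_one_pow]
    norm_num
  · have hp3 : (3 : ℤ) ≤ p := by exact_mod_cast (hp.two_le.lt_of_ne' hp2 : 2 < p)
    have hpow : (2 : ℤ) ≤ ((p : ℤ) - 1) ^ (e - 1) :=
      calc (2 : ℤ) = 2 ^ 1 := by norm_num
        _ ≤ 2 ^ (e - 1) := pow_le_pow_right₀ (by norm_num) (by omega)
        _ ≤ ((p : ℤ) - 1) ^ (e - 1) := pow_le_pow_left₀ (by norm_num) (by linarith) _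
    rcases neg_one_pow_eq_or ℤ (e - 1) with h | h <;> rw [h] <;> linarith

lemma totient_prime_pow_pow_div_mul_mem {p v e : ℕ} (hp : p.Prime) (hv : 1 ≤ v) (he : 2 ≤ e)
    (h2 : p = 2 → Even e) :
    ((p ^ v).totient : ℚ) ^ e / (p : ℚ) ^ v * (1 - (-1) ^ (e - 1) / ((p : ℚ) - 1) ^ (e - 1)) ∈
      positiveNaturals := by
  have hp1 : (p : ℚ) - 1 ≠ 0 := sub_ne_zero.mpr (by exact_mod_cast hp.one_lt.ne')
  have hp0 : (p : ℚ) ≠ 0 := by exact_mod_cast hp.ne_zero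
  have hpz : (1 : ℤ) < p := by exact_mod_cast hp.one_lt
  convert positiveNaturals.intCast_div_mem (by positivity) (pow_mul_sub_one_pow_dvd (p : ℤ) hv he)
    (mul_pos (by positivity) (sub_pos.mpr (neg_one_pow_lt_sub_one_pow hp he h2))) using 1
  rw [Nat.totient_prime_pow hp hv]
  push_cast [Nat.cast_sub hp.one_le]
  field_simp

lemma prod_totient_prime_pow_div_mul_mem {ι : Type*} {s T : Finset ι} (hT : T ⊆ s) {p v : ℕ}
    (hp : p.Prime) (hv : 1 ≤ v) (a : ι → ℕ) (haT : ∀ i ∈ T, a i = v) (he : 2 ≤ #T)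
    (h2 : p = 2 → Even #T) :
    (∏ i ∈ s, ((p ^ a i).totient : ℚ)) / (p : ℚ) ^ v *
        (1 - (-1) ^ (#T - 1) / ((p : ℚ) - 1) ^ (#T - 1)) ∈ positiveNaturals := by
  classical
  have hTprod : ∏ i ∈ T, ((p ^ a i).totient : ℚ) = ((p ^ v).totient : ℚ) ^ #T := by
    rw [prod_congr rfl fun i hi => by rw [haT i hi], prod_const]
  rw [← prod_sdiff hT, hTprod, mul_div_assoc, mul_assoc]
  exact mul_mem (prod_mem fun i _ => positiveNaturals.natCast_mem
    (Nat.totient_pos.mpr (pow_pos hp.pos _))) (totient_prime_pow_pow_div_mul_mem hp hv he h2)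

lemma prod_totient_div_lcm_mul_mem {ι : Type*} [Fintype ι] (a : ι → ℕ) (ha : ∀ i, 0 < a i)
    (he : ∀ p : ℕ, p.Prime → p ∣ univ.lcm a →
      2 ≤ #(univ.filter fun i => ¬ p ∣ univ.lcm a / a i))
    (h2 : Even (univ.lcm a) → Even #(univ.filter fun i => ¬ 2 ∣ univ.lcm a / a i)) :
    (∏ i, ((a i).totient : ℚ)) / ((univ.lcm a : ℕ) : ℚ) *
        ∏ p ∈ (univ.lcm a).primeFactors,
          (1 - (-1 : ℚ) ^ (#(univ.filter fun i => ¬ p ∣ univ.lcm a / a i) - 1) /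
            ((p : ℚ) - 1) ^ (#(univ.filter fun i => ¬ p ∣ univ.lcm a / a i) - 1)) ∈
      positiveNaturals := by
  set L := univ.lcm a
  have hL : L ≠ 0 := by simp [L, Finset.lcm_eq_zero_iff, (ha _).ne']
  have hdvd : ∀ i, a i ∣ L := fun i => dvd_lcm (mem_univ i)
  have htotient : ∏ i, ((a i).totient : ℚ) =
      ∏ p ∈ L.primeFactors, ∏ i, ((p ^ (a i).factorization p).totient : ℚ) := by
    rw [prod_comm]
    exact prod_congr rfl fun i _ => by exact_mod_cast
      Nat.totient_eq_prod_of_primeFactors_subset (ha i).ne' (Nat.primeFactors_mono (hdvd i) hL)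
  have hLprod : (L : ℚ) = ∏ p ∈ L.primeFactors, (p : ℚ) ^ L.factorization p := by
    conv_lhs => rw [← Nat.prod_factorization_pow_eq_self hL]
    rw [Nat.prod_factorization_eq_prod_primeFactors]
    push_cast
    rfl
  rw [htotient, hLprod, ← prod_div_distrib, ← prod_mul_distrib]
  refine prod_mem fun p hp => ?_
  have hpp := Nat.prime_of_mem_primeFactors hp
  have hpL := Nat.dvd_of_mem_primeFactors hp
  exact prod_totient_prime_pow_div_mul_mem (filter_subset _ _) hpp
    (hpp.factorization_pos_of_dvd hL hpL) _
    (fun i hi => Nat.factorization_eq_of_not_dvd_div (hdvd i) hL (mem_filter.mp hi).2)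
    (he p hpp hpL) fun h => by subst h; exact h2 (even_iff_two_dvd.mpr hpL)

lemma pow_mul_prod_one_sub_one_div_pow_mem {n k : ℕ} (hn : 0 < n) (hk : k ≠ 0) {P : Finset ℕ}
    (hP : ∀ p ∈ P, 1 < p) (hdvd : ∏ p ∈ P, p ∣ n) :
    (n : ℚ) ^ k * ∏ p ∈ P, (1 - 1 / (p : ℚ) ^ k) ∈ positiveNaturals := by
  obtain ⟨c, rfl⟩ := hdvd
  have hc : 0 < c := Nat.pos_of_mul_pos_left hn
  have hfactor : ∀ p ∈ P, (p : ℚ) ^ k * (1 - 1 / (p : ℚ) ^ k) = ((p ^ k - 1 : ℕ) : ℚ) := by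
    intro p hp
    have hp0 : (p : ℚ) ^ k ≠ 0 := pow_ne_zero _ (by exact_mod_cast (hP p hp).ne_bot)
    rw [Nat.cast_sub (Nat.one_le_pow _ _ (hP p hp).le), mul_sub, mul_one_div_cancel hp0]
    push_cast; ring
  rw [Nat.cast_mul, mul_pow, Nat.cast_prod, ← prod_pow, mul_right_comm, ← prod_mul_distrib,
    prod_congr rfl hfactor]
  exact mul_mem (prod_mem fun p hp => positiveNaturals.natCast_mem
      (Nat.sub_pos_of_lt (Nat.one_lt_pow hk (hP p hp))))
    (pow_mem (positiveNaturals.natCast_mem hc) _)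

theorem counting_expression_pos_int_general (g k n : ℕ) (hn : 0 < n)
    (hg : 1 ≤ g) (nn : Fin k → ℕ) (hnn : ∀ i, 0 < nn i)
    (hdvd : Finset.univ.lcm nn ∣ n)
    (he : ∀ p : ℕ, p.Prime → p ∣ Finset.univ.lcm nn →
      2 ≤ (Finset.univ.filter (fun i => ¬ p ∣ Finset.univ.lcm nn / nn i)).card)
    (he2 : Even (Finset.univ.lcm nn) →
      Even (Finset.univ.filter (fun i => ¬ 2 ∣ Finset.univ.lcm nn / nn i)).card) :
    0 < (n : ℚ) ^ (2 * g) / ((Finset.univ.lcm nn : ℕ) : ℚ) *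
        (∏ i, (Nat.totient (nn i) : ℚ)) *
        (∏ p ∈ (n / Finset.univ.lcm nn).primeFactors, (1 - 1 / (p : ℚ) ^ (2 * g))) *
        (∏ p ∈ (Finset.univ.lcm nn).primeFactors,
          (1 - (-1 : ℚ) ^ ((Finset.univ.filter
              (fun i => ¬ p ∣ Finset.univ.lcm nn / nn i)).card - 1) /
            ((p : ℚ) - 1) ^ ((Finset.univ.filter
              (fun i => ¬ p ∣ Finset.univ.lcm nn / nn i)).card - 1))) ∧
      ∃ m : ℕ, 0 < m ∧
        (n : ℚ) ^ (2 * g) / ((Finset.univ.lcm nn : ℕ) : ℚ) *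
          (∏ i, (Nat.totient (nn i) : ℚ)) *
          (∏ p ∈ (n / Finset.univ.lcm nn).primeFactors, (1 - 1 / (p : ℚ) ^ (2 * g))) *
          (∏ p ∈ (Finset.univ.lcm nn).primeFactors,
            (1 - (-1 : ℚ) ^ ((Finset.univ.filter
                (fun i => ¬ p ∣ Finset.univ.lcm nn / nn i)).card - 1) /
              ((p : ℚ) - 1) ^ ((Finset.univ.filter
                (fun i => ¬ p ∣ Finset.univ.lcm nn / nn i)).card - 1))) = m := by
  have hcofactor := pow_mul_prod_one_sub_one_div_pow_mem hn (by omega : 2 * g ≠ 0)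
    (fun p hp => (Nat.prime_of_mem_primeFactors hp).one_lt)
    ((Nat.prod_primeFactors_dvd (n / Finset.univ.lcm nn)).trans (Nat.div_dvd_of_dvd hdvd))
  obtain ⟨m, hm, heq⟩ := mul_mem hcofactor (prod_totient_div_lcm_mul_mem nn hnn he he2)
  rw [show ∀ a b c d e : ℚ, a / b * c * d * e = a * d * (c / b * e) from
    fun _ _ _ _ _ => by ring, heq]
  exact ⟨by exact_mod_cast hm, m, hm, rfl⟩

/-- Under the conditions of Harvey's criterion (with `n`, `k` even, `g ≥ 1`,
`𝔫 ∣ n`, `e_p ≥ 2` for all primes `p ∣ 𝔫`, and `e_2` even when `𝔫` is even),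
the counting expression
`(n^{2g}/𝔫) ∏_i φ(n_i) ∏_{p ∣ n/𝔫}(1-1/p^{2g}) ∏_{p ∣ 𝔫}(1-(-1)^{e_p-1}/(p-1)^{e_p-1})`
is a positive rational number, and in fact a positive integer. -/
theorem counting_expression_pos_int (g k n : ℕ) (hn : 0 < n) (hneven : Even n)
    (hkeven : Even k) (hg : 1 ≤ g) (nn : Fin k → ℕ) (hnn : ∀ i, 0 < nn i)
    (hdvd : Finset.univ.lcm nn ∣ n)
    (he : ∀ p : ℕ, p.Prime → p ∣ Finset.univ.lcm nn →
      2 ≤ (Finset.univ.filter (fun i => ¬ p ∣ Finset.univ.lcm nn / nn i)).card)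
    (he2 : Even (Finset.univ.lcm nn) →
      Even (Finset.univ.filter (fun i => ¬ 2 ∣ Finset.univ.lcm nn / nn i)).card) :
    0 < (n : ℚ) ^ (2 * g) / ((Finset.univ.lcm nn : ℕ) : ℚ) *
        (∏ i, (Nat.totient (nn i) : ℚ)) *
        (∏ p ∈ (n / Finset.univ.lcm nn).primeFactors, (1 - 1 / (p : ℚ) ^ (2 * g))) *
        (∏ p ∈ (Finset.univ.lcm nn).primeFactors,
          (1 - (-1 : ℚ) ^ ((Finset.univ.filter
              (fun i => ¬ p ∣ Finset.univ.lcm nn / nn i)).card - 1) /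
            ((p : ℚ) - 1) ^ ((Finset.univ.filter
              (fun i => ¬ p ∣ Finset.univ.lcm nn / nn i)).card - 1))) ∧
      ∃ m : ℕ, 0 < m ∧
        (n : ℚ) ^ (2 * g) / ((Finset.univ.lcm nn : ℕ) : ℚ) *
          (∏ i, (Nat.totient (nn i) : ℚ)) *
          (∏ p ∈ (n / Finset.univ.lcm nn).primeFactors, (1 - 1 / (p : ℚ) ^ (2 * g))) *
          (∏ p ∈ (Finset.univ.lcm nn).primeFactors,
            (1 - (-1 : ℚ) ^ ((Finset.univ.filter
                (fun i => ¬ p ∣ Finset.univ.lcm nn / nn i)).card - 1) /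
              ((p : ℚ) - 1) ^ ((Finset.univ.filter
                (fun i => ¬ p ∣ Finset.univ.lcm nn / nn i)).card - 1))) = m :=
  counting_expression_pos_int_general g k n hn hg nn hnn hdvd he he2
end
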